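/- arXiv:1710.01072 — 7 statements merged into one kernel-verified Lean document; each statement's English description precedes it below -/
import Mathlib

section
/- The Mycielskian M₂(G) of a graph G satisfies χ(M₂(G)) = χ(G) + 1. -/
/-!
Colouring `(u, i)` by the colour of `u` and `z` by a fresh colour turns an `n`-colouring of `G`
into an `(n + 1)`-colouring of `M₂(G)`. Conversely, given an `(n + 1)`-colouring `c` of `M₂(G)`,
colour `u` by `c (u, 0)`, or by `c (u, 1)` when `c (u, 0) = c z`. Since every `(u, 1)` is adjacent
to `z`, this never uses the colour `c z`, and it is proper on `G` because `(u, 0)` is adjacent to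
both `(v, 0)` and `(v, 1)` whenever `u` and `v` are adjacent.
-/

/-- The generalised Mycielskian `M_r(G)`: vertex set `V × {0,…,r−1} ∪ {z}`
(`none` plays the role of `z`), with edges `{(u,0),(v,0)}` and `{(u,i),(v,i+1)}`
whenever `{u,v} ∈ E(G)`, and edges `{(u,r−1),z}` for all `u`. -/
def genMycielski {V : Type} (G : SimpleGraph V) (r : ℕ) :
    SimpleGraph (Option (V × Fin r)) :=
  SimpleGraph.fromRel (fun a b =>
    match a, b with
    | some (u, i), some (v, j) =>
        G.Adj u v ∧ ((i : ℕ) = 0 ∧ (j : ℕ) = 0 ∨ (j : ℕ) = (i : ℕ) + 1)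
    | some (_, i), none => (i : ℕ) = r - 1
    | _, _ => False)

namespace SimpleGraph

theorem chromaticNumber_eq_add_one_of_colorable_succ_iff {V W : Type*} {G : SimpleGraph V}
    {H : SimpleGraph W} [Nonempty W] (h : ∀ n, H.Colorable (n + 1) ↔ G.Colorable n) :
    H.chromaticNumber = G.chromaticNumber + 1 := by
  refine WithTop.eq_of_forall_le_coe_iff fun n => ?_
  change H.chromaticNumber ≤ (n : ℕ∞) ↔ G.chromaticNumber + 1 ≤ (n : ℕ∞)
  cases n with
  | zero => simp [chromaticNumber_eq_zero_iff]
  | succ n =>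
    rw [chromaticNumber_le_iff_colorable, h, ← chromaticNumber_le_iff_colorable, Nat.cast_succ,
      ENat.add_le_add_iff_right ENat.one_ne_top]

end SimpleGraph

open SimpleGraph

section genMycielski

variable {V : Type} {G : SimpleGraph V} {u v : V}

theorem adj_of_genMycielski_adj {r : ℕ} {i j : Fin r}
    (h : (genMycielski G r).Adj (some (u, i)) (some (v, j))) : G.Adj u v := by
  rw [genMycielski, fromRel_adj] at h
  obtain ⟨-, ⟨huv, -⟩ | ⟨hvu, -⟩⟩ := h
  exacts [huv, hvu.symm]

theorem genMycielski_two_adj_zero_zero (h : G.Adj u v) :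
    (genMycielski G 2).Adj (some (u, 0)) (some (v, 0)) := by
  rw [genMycielski, fromRel_adj]
  exact ⟨by simp [h.ne], Or.inl ⟨h, Or.inl ⟨rfl, rfl⟩⟩⟩

theorem genMycielski_two_adj_zero_one (h : G.Adj u v) :
    (genMycielski G 2).Adj (some (u, 0)) (some (v, 1)) := by
  rw [genMycielski, fromRel_adj]
  exact ⟨by simp, Or.inl ⟨h, Or.inr rfl⟩⟩

theorem genMycielski_two_adj_one_none (u : V) : (genMycielski G 2).Adj (some (u, 1)) none := by
  rw [genMycielski, fromRel_adj]
  exact ⟨by simp, Or.inl rfl⟩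

theorem genMycielski_colorable_succ (r : ℕ) {n : ℕ} (h : G.Colorable n) :
    (genMycielski G r).Colorable (n + 1) := by
  obtain ⟨C⟩ := h
  refine ⟨Coloring.mk (Option.elim · (Fin.last n) fun x => (C x.1).castSucc) ?_⟩
  rintro (_ | ⟨u, i⟩) (_ | ⟨v, j⟩) hab
  · exact (hab.ne rfl).elim
  · exact (Fin.castSucc_lt_last _).ne'
  · exact (Fin.castSucc_lt_last _).ne
  · exact Fin.castSucc_injective n |>.ne (C.valid (adj_of_genMycielski_adj hab))

theorem colorable_of_genMycielski_two_colorable_succ {n : ℕ}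
    (h : (genMycielski G 2).Colorable (n + 1)) : G.Colorable n := by
  obtain ⟨C⟩ := h
  let a := C none
  let copy : V → Option (V × Fin 2) := fun u =>
    if C (some (u, 0)) = a then some (u, 1) else some (u, 0)
  have copy_ne (u : V) : C (copy u) ≠ a := by
    unfold copy
    split_ifs with hu
    exacts [C.valid (genMycielski_two_adj_one_none u), hu]
  have copy_valid {u v : V} (huv : G.Adj u v) : C (copy u) ≠ C (copy v) := by
    unfold copy
    split_ifs with hu hv hv
    · exact fun _ => C.valid (genMycielski_two_adj_zero_zero huv) (hu.trans hv.symm)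
    · exact (C.valid (genMycielski_two_adj_zero_one huv.symm)).symm
    · exact C.valid (genMycielski_two_adj_zero_one huv)
    · exact C.valid (genMycielski_two_adj_zero_zero huv)
  have hcard : Fintype.card {x : Fin (n + 1) // x ≠ a} = n := by
    simp [Fintype.card_subtype_compl]
  exact hcard ▸ (Coloring.mk (fun u => ⟨C (copy u), copy_ne u⟩)
    fun huv h => copy_valid huv (congrArg Subtype.val h)).colorable

end genMycielski

/-- The Mycielskian `M₂(G)` satisfies `χ(M₂(G)) = χ(G) + 1`. -/
theorem chromaticNumber_mycielski {V : Type} (G : SimpleGraph V) :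
    (genMycielski G 2).chromaticNumber = G.chromaticNumber + 1 :=
  chromaticNumber_eq_add_one_of_colorable_succ_iff fun _ =>
    ⟨colorable_of_genMycielski_two_colorable_succ, genMycielski_colorable_succ 2⟩
end

section
/- If G is triangle-free, then the Mycielskian M₂(G) is triangle-free. -/
lemma genMycielski_adj_some {V : Type} (G : SimpleGraph V) {u v : V} {i j : Fin 2}
    (h : (genMycielski G 2).Adj (some (u, i)) (some (v, j))) :
    G.Adj u v ∧ (((i : ℕ) = 0 ∧ (j : ℕ) = 0) ∨ (j : ℕ) = (i : ℕ) + 1 ∨ (i : ℕ) = (j : ℕ) + 1) := by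
  obtain ⟨-, h | h⟩ := h
  · exact ⟨h.1, h.2.imp id Or.inl⟩
  · exact ⟨h.1.symm, h.2.imp (fun ⟨a, b⟩ => ⟨b, a⟩) Or.inr⟩

lemma genMycielski_adj_none {V : Type} (G : SimpleGraph V) {u : V} {i : Fin 2}
    (h : (genMycielski G 2).Adj (some (u, i)) none) : (i : ℕ) = 1 := by
  obtain ⟨-, h | h⟩ := h
  · exact h
  · exact h.elim

/-- If `G` is triangle-free, then so is its Mycielskian `M₂(G)`. -/
theorem mycielski_triangleFree {V : Type} (G : SimpleGraph V)
    (hG : G.CliqueFree 3) : (genMycielski G 2).CliqueFree 3 := by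
  classical
  intro s hs
  obtain ⟨a, b, c, hab, hac, hbc, hst⟩ := Finset.card_eq_three.mp hs.card_eq
  subst hst
  have h := hs.isClique
  have h1 : (genMycielski G 2).Adj a b := h (by simp) (by simp) hab
  have h2 : (genMycielski G 2).Adj a c := h (by simp) (by simp) hac
  have h3 : (genMycielski G 2).Adj b c := h (by simp) (by simp) hbc
  match a, b, c with
  | none, none, _ => exact hab rfl
  | none, _, none => exact hac rfl
  | _, none, none => exact hbc rfl
  | none, some (v, j), some (w, k) =>
      have hj := genMycielski_adj_none G h1.symm
      have hk := genMycielski_adj_none G h2.symm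
      obtain ⟨-, hidx⟩ := genMycielski_adj_some G h3
      omega
  | some (v, j), none, some (w, k) =>
      have hj := genMycielski_adj_none G h1
      have hk := genMycielski_adj_none G h3.symm
      obtain ⟨-, hidx⟩ := genMycielski_adj_some G h2
      omega
  | some (v, j), some (w, k), none =>
      have hj := genMycielski_adj_none G h2
      have hk := genMycielski_adj_none G h3
      obtain ⟨-, hidx⟩ := genMycielski_adj_some G h1
      omega
  | some (u, i), some (v, j), some (w, k) =>
      obtain ⟨huv, hij⟩ := genMycielski_adj_some G h1
      obtain ⟨huw, hik⟩ := genMycielski_adj_some G h2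
      obtain ⟨hvw, hjk⟩ := genMycielski_adj_some G h3
      exact hG _ (SimpleGraph.is3Clique_triple_iff.mpr ⟨huv, huw, hvw⟩)
end

section
/- For every k ≥ 2 there exists a triangle-free graph with chromatic number at least k. -/
/-!
The Mycielskian `M(G)` of `G` adds a shadow `v'` of every vertex `v`, adjacent to the
neighbours of `v`, and an apex adjacent to all shadows. A triangle of `M(G)` cannot use the
apex (the shadows are independent) and contains at most one shadow, and replacing that shadow
by its original gives a triangle of `G`; so `M(G)` is triangle-free when `G` is. Given a
colouring of `M(G)`, recolour each original vertex that has the apex's colour with the colour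
of its shadow: this is a colouring of `G` avoiding the apex's colour, so `χ(M(G)) ≥ χ(G) + 1`.
Iterating from `K₂` proves the theorem.
-/

namespace SimpleGraph

universe u

variable {V : Type u} {G : SimpleGraph V}

inductive MycielskiVertex (V : Type u) : Type u
  | orig : V → MycielskiVertex V
  | shadow : V → MycielskiVertex V
  | apex : MycielskiVertex V

open MycielskiVertex

def mycielskian (G : SimpleGraph V) : SimpleGraph (MycielskiVertex V) where
  Adj
    | orig u, orig v | orig u, shadow v | shadow u, orig v => G.Adj u v
    | shadow _, apex | apex, shadow _ => True
    | _, _ => False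
  symm := ⟨by
    rintro (u | u | _) (v | v | _) h <;> first | exact G.adj_symm h | trivial⟩
  loopless := ⟨by rintro (u | u | _) h <;> first | exact G.loopless.irrefl u h | exact h⟩

theorem CliqueFree.mycielskian (hG : G.CliqueFree 3) : G.mycielskian.CliqueFree 3 := by
  classical
  intro s hs
  obtain ⟨a, b, c, hab, hac, hbc, -⟩ := is3Clique_iff.1 hs
  rcases a with u | u | _ <;> rcases b with v | v | _ <;> rcases c with w | w | _ <;>
    first
      | exact (hab : False).elim
      | exact (hac : False).elim
      | exact (hbc : False).elim
      | exact hG _ (is3Clique_triple_iff.2 ⟨hab, hac, hbc⟩)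

def Coloring.ofMycielskian {α : Type*} [DecidableEq α] (c : G.mycielskian.Coloring α) :
    G.Coloring {x : α // x ≠ c apex} :=
  have shadow_ne_apex (v : V) : c (shadow v) ≠ c apex := c.valid trivial
  Coloring.mk
    (fun v => if hv : c (orig v) = c apex then ⟨c (shadow v), shadow_ne_apex v⟩
      else ⟨c (orig v), hv⟩)
    (by
      intro v w hvw hfeq
      rw [Subtype.ext_iff] at hfeq
      split_ifs at hfeq with hv hw hw
      · exact c.valid (show G.mycielskian.Adj (orig v) (orig w) from hvw) (hv.trans hw.symm)
      · exact c.valid (show G.mycielskian.Adj (shadow v) (orig w) from hvw) hfeq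
      · exact c.valid (show G.mycielskian.Adj (orig v) (shadow w) from hvw) hfeq
      · exact c.valid (show G.mycielskian.Adj (orig v) (orig w) from hvw) hfeq)

theorem Colorable.of_mycielskian {n : ℕ} (h : G.mycielskian.Colorable (n + 1)) :
    G.Colorable n := by
  obtain ⟨c⟩ := h
  simpa [Fintype.card_subtype_compl] using c.ofMycielskian.colorable

theorem chromaticNumber_add_one_le_chromaticNumber_mycielskian :
    G.chromaticNumber + 1 ≤ G.mycielskian.chromaticNumber := by
  rw [chromaticNumber_eq_biInf (G := G.mycielskian)]
  refine le_iInf₂ fun m (hm : G.mycielskian.Colorable m) => ?_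
  cases m with
  | zero => exact (hm.some apex).elim0
  | succ n =>
    push_cast
    gcongr
    exact hm.of_mycielskian.chromaticNumber_le

end SimpleGraph

open SimpleGraph

/-- For every `k ≥ 2` there exists a triangle-free graph with chromatic number
at least `k`. -/
theorem exists_triangleFree_chromatic_ge (k : ℕ) (hk : 2 ≤ k) :
    ∃ (V : Type) (G : SimpleGraph V),
      G.CliqueFree 3 ∧ (k : ℕ∞) ≤ G.chromaticNumber := by
  induction k, hk using Nat.le_induction with
  | base =>
    refine ⟨Fin 2, ⊤, cliqueFree_of_card_lt (by simp), ?_⟩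
    simp [chromaticNumber_top]
  | succ k _ ih =>
    obtain ⟨V, G, hG, hχ⟩ := ih
    refine ⟨_, G.mycielskian, hG.mycielskian, ?_⟩
    calc ((k + 1 : ℕ) : ℕ∞) = k + 1 := Nat.cast_succ k
      _ ≤ G.chromaticNumber + 1 := by gcongr
      _ ≤ G.mycielskian.chromaticNumber :=
        chromaticNumber_add_one_le_chromaticNumber_mycielskian
end

section
/- If G has odd girth g (i.e., the shortest odd cycle in G has length g), then for every r ≥ 1 the generalised Mycielskian M_r(G) has odd girth at least min(g, 2r+1). -/
/-- The odd girth of `G`: the length of a shortest odd cycle (`⊤` if none). -/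
noncomputable def oddGirth {V : Type} (G : SimpleGraph V) : ℕ∞ :=
  sInf {n : ℕ∞ | ∃ (v : V) (c : G.Walk v v), c.IsCycle ∧ Odd c.length ∧ (c.length : ℕ∞) = n}

/-!
Put `z` at level `r` and `(u, i)` at level `i`. Every edge of `M_r(G)` changes the level by
exactly one, except the edges inside level `0`. An odd closed walk through `z` therefore has to
descend to level `0` and climb back, which takes at least `2r` steps. An odd closed walk avoiding
`z` projects, via `(u, i) ↦ u`, to an odd closed walk of the same length in `G`, and every odd
closed walk contains an odd cycle no longer than itself.
-/

namespace SimpleGraph.Walk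

variable {V : Type} {G : SimpleGraph V} {u v : V}

@[simp]
theorem length_induce {s : Set V} (w : G.Walk u v) (hw : ∀ x ∈ w.support, x ∈ s) :
    (w.induce s hw).length = w.length := by
  have := congrArg length (map_induce w hw)
  rwa [length_map] at this

theorem IsPath.cons_isCycle_of_even {p : G.Walk v u} (hp : p.IsPath) (h : G.Adj u v)
    (he : Even p.length) : (cons h p).IsCycle := by
  have hpos : p.length ≠ 0 := fun h0 => h.ne (eq_of_length_eq_zero h0).symm
  obtain ⟨k, hk⟩ := he
  rw [isCycle_iff_isPath_tail_and_le_length]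
  simp only [tail_cons, length_cons]
  exact ⟨by convert hp; simp, by omega⟩

theorem exists_isPath_same_parity_or_odd_isCycle [DecidableEq V] (p : G.Walk u v) :
    (∃ q : G.Walk u v, q.IsPath ∧ q.length ≤ p.length ∧ q.length % 2 = p.length % 2) ∨
      ∃ (x : V) (c : G.Walk x x), c.IsCycle ∧ Odd c.length ∧ c.length ≤ p.length := by
  induction p with
  | nil => exact .inl ⟨nil, .nil, le_rfl, rfl⟩
  | @cons u w v h p ih =>
    rcases ih with ⟨q, hq, hqp, hpar⟩ | ⟨x, c, hc, hodd, hcp⟩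
    · by_cases hu : u ∈ q.support
      · -- `q` returns to `u`: either the loop `u → w ⇝ u` is odd, or the rest `u ⇝ v` has the
        -- parity of `cons h p`.
        have hsplit := congrArg length (q.take_spec hu)
        rw [length_append] at hsplit
        rcases Nat.even_or_odd (q.takeUntil u hu).length with he | ho
        · refine .inr ⟨u, _, (hq.takeUntil hu).cons_isCycle_of_even h he, ?_, ?_⟩
          · simpa only [length_cons] using he.add_one
          · simp only [length_cons]; omega
        · rw [Nat.odd_iff] at ho
          refine .inl ⟨q.dropUntil u hu, hq.dropUntil hu, ?_, ?_⟩ <;>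
            simp only [length_cons] <;> omega
      · exact .inl ⟨cons h q, hq.cons hu, by simp only [length_cons]; omega,
          by simp only [length_cons]; omega⟩
    · exact .inr ⟨x, c, hc, hodd, by simp only [length_cons]; omega⟩

theorem exists_odd_isCycle_of_odd_length (w : G.Walk v v) (hw : Odd w.length) :
    ∃ (x : V) (c : G.Walk x x), c.IsCycle ∧ Odd c.length ∧ c.length ≤ w.length := by
  classical
  refine (exists_isPath_same_parity_or_odd_isCycle w).resolve_left ?_
  rintro ⟨q, hq, -, hpar⟩
  rw [length_eq_zero_iff.mpr (isPath_iff_nil.mp hq), Nat.odd_iff.mp hw] at hpar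
  exact absurd hpar (by decide)

end SimpleGraph.Walk

open SimpleGraph

theorem oddGirth_le_length_of_odd {V : Type} {G : SimpleGraph V} {v : V} (w : G.Walk v v)
    (hw : Odd w.length) : oddGirth G ≤ w.length := by
  obtain ⟨x, c, hc, hodd, hcw⟩ := w.exists_odd_isCycle_of_odd_length hw
  exact (sInf_le ⟨x, c, hc, hodd, rfl⟩ : oddGirth G ≤ c.length).trans (by exact_mod_cast hcw)

namespace genMycielski

variable {V : Type} {G : SimpleGraph V} {r : ℕ}

def level : Option (V × Fin r) → ℕ
  | none => r
  | some (_, i) => i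

@[simp]
theorem level_none : level (none : Option (V × Fin r)) = r := rfl

theorem level_of_adj {a b : Option (V × Fin r)} (h : (genMycielski G r).Adj a b) :
    level a = 0 ∧ level b = 0 ∨ level b = level a + 1 ∨ level a = level b + 1 := by
  rcases a with _ | ⟨u, i⟩ <;> rcases b with _ | ⟨v, j⟩ <;>
    simp [genMycielski, level] at h ⊢ <;> omega

theorem level_le_level_add_length {a b : Option (V × Fin r)} (w : (genMycielski G r).Walk a b) :
    level b ≤ level a + w.length := by
  induction w with
  | nil => simp
  | cons h p ih => have := level_of_adj h; simp only [Walk.length_cons]; omega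

theorem level_add_level_le_length_of_odd {a b : Option (V × Fin r)}
    (w : (genMycielski G r).Walk a b) (hw : Odd (w.length + level a + level b)) :
    level a + level b ≤ w.length := by
  induction w with
  | nil => rw [Walk.length_nil, Nat.odd_iff] at hw; omega
  | cons h p ih =>
    have hp := level_le_level_add_length p
    rw [Walk.length_cons] at hw ⊢
    rcases level_of_adj h with ⟨ha, hx⟩ | hx | hx
    · omega
    all_goals
      have := ih (by rw [Nat.odd_iff] at hw ⊢; omega)
      omega

variable (G r) in
def proj : (genMycielski G r).induce {x | x.isSome} →g G where
  toFun x := (x.1.get x.2).1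
  map_rel' := by
    rintro ⟨_ | ⟨u, i⟩, hx⟩ ⟨_ | ⟨v, j⟩, hy⟩ h
    all_goals simp [genMycielski] at hx hy h ⊢
    rcases h.2 with ⟨h, -⟩ | ⟨h, -⟩
    exacts [h, h.symm]

end genMycielski

theorem oddGirth_genMycielski_general {V : Type} (G : SimpleGraph V) (g : ℕ)
    (hg : oddGirth G = (g : ℕ∞)) (r : ℕ) :
    min (g : ℕ∞) ((2 * r + 1 : ℕ) : ℕ∞) ≤ oddGirth (genMycielski G r) := by
  classical
  refine le_sInf ?_
  rintro _ ⟨a, c, -, hodd, rfl⟩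
  by_cases hz : none ∈ c.support
  · have hlen := genMycielski.level_add_level_le_length_of_odd (c.rotate none hz)
    simp only [Walk.length_rotate, genMycielski.level_none] at hlen
    rw [Nat.odd_iff] at hodd
    have h2r : r + r ≤ c.length := hlen (by rw [Nat.odd_iff]; omega)
    exact (min_le_right _ _).trans (by exact_mod_cast (by omega : 2 * r + 1 ≤ c.length))
  · have hw : ∀ x ∈ c.support, x ∈ {x : Option (V × Fin r) | x.isSome} :=
      fun x hx => Option.isSome_iff_ne_none.mpr (by rintro rfl; exact hz hx)
    have hG := oddGirth_le_length_of_odd ((c.induce _ hw).map (genMycielski.proj G r))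
      (by simpa using hodd)
    exact (min_le_left _ _).trans (by simpa [hg] using hG)

/-- If `G` has odd girth `g`, then for every `r ≥ 1` the generalised
Mycielskian `M_r(G)` has odd girth at least `min(g, 2r+1)`. -/
theorem oddGirth_genMycielski {V : Type} (G : SimpleGraph V) (g : ℕ)
    (hg : oddGirth G = (g : ℕ∞)) (r : ℕ) (hr : 1 ≤ r) :
    min (g : ℕ∞) ((2 * r + 1 : ℕ) : ℕ∞) ≤ oddGirth (genMycielski G r) :=
  oddGirth_genMycielski_general G g hg r
end

section
/- Stiebitz's theorem implies the Borsuk–Ulam theorem: if for every k ≥ 2 every graph in 𝓜_k has chromatic number at least k, then there is no continuous map f : Sⁿ → S^{n−1} with f(−x) = −f(x) for all x ∈ Sⁿ. -/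
/-- `MycFamily k V G` : the graph `G` on vertex set `V` belongs to the family
`𝓜_k` of generalised Mycielski graphs, obtained from `K₂` by `k − 2`
iterations of `M_r(·)`, where `r ≥ 1` may vary between iterations. -/
inductive MycFamily : ℕ → (V : Type) → SimpleGraph V → Prop
  | base : MycFamily 2 (Fin 2) ⊤
  | step {k : ℕ} {V : Type} {G : SimpleGraph V} (r : ℕ) (hr : 1 ≤ r)
      (h : MycFamily k V G) :
      MycFamily (k + 1) (Option (V × Fin r)) (genMycielski G r)

open Metric Set Submodule Real
open scoped RealInnerProductSpace

theorem exists_coloring_of_le_inner {E : Type*} [NormedAddCommGroup E] [InnerProductSpace ℝ E]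
    {ι : Type*} [Fintype ι] (w : ι → E) {β : ℝ} (hβ : 0 < β) (S : Set E)
    (hS : ∀ x ∈ S, ∃ i, β ≤ ⟪w i, x⟫) :
    ∃ c > 0, ∃ C : S → ι, ∀ x y : S, C x = C y → c ≤ ‖(x + y : E)‖ := by
  choose C hC using fun x : S => hS x x.2
  set M := 1 + ∑ i, ‖w i‖
  have hM : 0 < M := by positivity
  refine ⟨2 * β / M, by positivity, C, fun x y hxy => ?_⟩
  rw [div_le_iff₀ hM]
  calc 2 * β ≤ ⟪w (C x), x + y⟫ := by
        rw [inner_add_right]; linarith [hC x, hxy ▸ hC y]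
    _ ≤ ‖w (C x)‖ * ‖(x + y : E)‖ := real_inner_le_norm _ _
    _ ≤ M * ‖(x + y : E)‖ := by
        gcongr
        linarith [Finset.single_le_sum (fun i _ => norm_nonneg (w i)) (Finset.mem_univ (C x))]
    _ = ‖(x + y : E)‖ * M := mul_comm _ _

/-- The vertices `e₀, …, eₙ₋₁, -(e₀ + ⋯ + eₙ₋₁)` of a simplex with the origin in its interior. -/
noncomputable def simplexVertex (n : ℕ) : Fin (n + 1) → EuclideanSpace ℝ (Fin n) :=
  Fin.lastCases (-WithLp.toLp 2 fun _ => 1) fun j => EuclideanSpace.single j 1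

theorem exists_le_inner_simplexVertex {n : ℕ} {x : EuclideanSpace ℝ (Fin n)} (hx : ‖x‖ = 1) :
    ∃ i, 1 / (2 * n + 1) ≤ ⟪simplexVertex n i, x⟫ := by
  by_contra! h
  set β : ℝ := 1 / (2 * n + 1) with hβ
  have hcoord : ∀ j, x j < β := fun j => by
    simpa [simplexVertex, EuclideanSpace.inner_single_left] using h j.castSucc
  have hsum : -∑ j, x j < β := by
    simpa [simplexVertex, PiLp.inner_apply] using h (Fin.last n)
  have hsq_le_abs : ∀ j, x j ^ 2 ≤ |x j| := fun j => by
    have : |x j| ≤ 1 := hx ▸ PiLp.norm_apply_le x j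
    nlinarith [abs_nonneg (x j), sq_abs (x j)]
  have habs_le : ∀ j, |x j| ≤ 2 * β - x j := fun j => by
    cases abs_cases (x j) <;> linarith [hcoord j, show 0 < β by positivity]
  have hβn : (2 * n + 1) * β = 1 := by rw [hβ]; field_simp
  have : (1 : ℝ) ≤ 2 * n * β - ∑ j, x j :=
    calc (1 : ℝ) = ‖x‖ ^ 2 := by rw [hx, one_pow]
      _ = ∑ j, x j ^ 2 := EuclideanSpace.real_norm_sq_eq x
      _ ≤ ∑ j, |x j| := Finset.sum_le_sum fun j _ => hsq_le_abs j
      _ ≤ ∑ j, (2 * β - x j) := Finset.sum_le_sum fun j _ => habs_le j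
      _ = 2 * n * β - ∑ j, x j := by
          rw [Finset.sum_sub_distrib, Finset.sum_const, Finset.card_univ, Fintype.card_fin,
            nsmul_eq_mul]
          ring
  linarith

theorem exists_coloring_sphere (n : ℕ) :
    ∃ c > 0, ∃ C : sphere (0 : EuclideanSpace ℝ (Fin n)) 1 → Fin (n + 1),
      ∀ x y, C x = C y → c ≤ ‖(x + y : EuclideanSpace ℝ (Fin n))‖ :=
  exists_coloring_of_le_inner (simplexVertex n) (by positivity) _ fun _ hx =>
    exists_le_inner_simplexVertex (mem_sphere_zero_iff_norm.mp hx)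

theorem exists_norm_add_lt_of_odd {E F : Type*} [SeminormedAddCommGroup E]
    [SeminormedAddCommGroup F] {r r' : ℝ} {f : sphere (0 : E) r → sphere (0 : F) r'}
    (hf : UniformContinuous f) (hodd : ∀ x, f (-x) = -f x) {c : ℝ} (hc : 0 < c) :
    ∃ δ > 0, ∀ x y : sphere (0 : E) r, ‖(x + y : E)‖ < δ → ‖(f x + f y : F)‖ < c := by
  obtain ⟨δ, hδ, hfδ⟩ := Metric.uniformContinuous_iff.mp hf c hc
  refine ⟨δ, hδ, fun x y hxy => ?_⟩
  have := @hfδ x (-y) (by rwa [Subtype.dist_eq, coe_neg_sphere, dist_eq_norm, sub_neg_eq_add])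
  rwa [hodd, Subtype.dist_eq, coe_neg_sphere, dist_eq_norm, sub_neg_eq_add] at this

theorem forall_adj_genMycielski {V : Type} {G : SimpleGraph V} {r : ℕ}
    {P : Option (V × Fin r) → Option (V × Fin r) → Prop} (hP : ∀ a b, P a b → P b a)
    (hlevel : ∀ u v (i j : Fin r), G.Adj u v → ((i : ℕ) = 0 ∧ (j : ℕ) = 0 ∨ (j : ℕ) = i + 1) →
      P (some (u, i)) (some (v, j)))
    (hapex : ∀ u (i : Fin r), (i : ℕ) = r - 1 → P (some (u, i)) none) :
    ∀ a b, (genMycielski G r).Adj a b → P a b := by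
  rintro (_ | ⟨u, i⟩) (_ | ⟨v, j⟩) hab <;>
    simp only [genMycielski, SimpleGraph.fromRel_adj] at hab
  · exact absurd rfl hab.1
  · exact hP _ _ (hapex v j (hab.2.resolve_left id))
  · exact hapex u i (hab.2.resolve_right id)
  · rcases hab.2 with ⟨huv, hij⟩ | ⟨hvu, hji⟩
    · exact hlevel u v i j huv hij
    · exact hP _ _ (hlevel v u j i hvu hji)

theorem norm_cos_smul_add_sin_smul {F : Type*} [NormedAddCommGroup F] [InnerProductSpace ℝ F]
    {x e : F} (hx : ‖x‖ = 1) (he : ‖e‖ = 1) (hxe : ⟪x, e⟫ = 0) (θ : ℝ) :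
    ‖cos θ • x + sin θ • e‖ = 1 := by
  have hsq : ‖cos θ • x + sin θ • e‖ ^ 2 = 1 ^ 2 := by
    rw [norm_add_sq_real, real_inner_smul_left, real_inner_smul_right, hxe, norm_smul,
      norm_smul, hx, he, Real.norm_eq_abs, Real.norm_eq_abs, mul_one, mul_one, sq_abs, sq_abs]
    linear_combination cos_sq_add_sin_sq θ
  exact (sq_eq_sq₀ (norm_nonneg _) zero_le_one).mp hsq

theorem norm_cos_smul_add_sin_smul_add_le {F : Type*} [SeminormedAddCommGroup F]
    [NormedSpace ℝ F] {y e : F} (hy : ‖y‖ ≤ 1) (he : ‖e‖ ≤ 1) (x : F) (a b : ℝ) :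
    ‖(cos a • x + sin a • e) + (cos b • y + sin b • e)‖ ≤ ‖x + y‖ + 2 * |a + b| := by
  have hsplit : (cos a • x + sin a • e) + (cos b • y + sin b • e) =
      cos a • (x + y) + ((cos b - cos (-a)) • y + (sin b - sin (-a)) • e) := by
    rw [cos_neg, sin_neg]; module
  have hcos : |cos b - cos (-a)| ≤ |a + b| := by
    simpa [add_comm] using abs_cos_sub_cos_le b (-a)
  have hsin : |sin b - sin (-a)| ≤ |a + b| := by
    simpa [add_comm] using abs_sin_sub_sin_le b (-a)
  rw [hsplit]
  calc _ ≤ ‖cos a • (x + y)‖ + (‖(cos b - cos (-a)) • y‖ + ‖(sin b - sin (-a)) • e‖) :=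
        (norm_add_le _ _).trans (by gcongr; exact norm_add_le _ _)
    _ ≤ 1 * ‖x + y‖ + (|a + b| * 1 + |a + b| * 1) := by
        simp only [norm_smul, Real.norm_eq_abs]
        gcongr
        exact abs_cos_le_one a
    _ = ‖x + y‖ + 2 * |a + b| := by ring

/-- The angles alternate in sign and grow in absolute value by `π / (4s)` per level, so that
consecutive levels are nearly antipodal and level `2s` reaches the pole `π / 2`. -/
noncomputable def zigzagAngle (s i : ℕ) : ℝ := (-1) ^ i * i * (π / (4 * s))

theorem zigzagAngle_zero (s : ℕ) : zigzagAngle s 0 = 0 := by simp [zigzagAngle]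

theorem abs_zigzagAngle_add_succ (s i : ℕ) :
    |zigzagAngle s i + zigzagAngle s (i + 1)| = π / (4 * s) := by
  have : zigzagAngle s i + zigzagAngle s (i + 1) = -((-1) ^ i * (π / (4 * s))) := by
    simp only [zigzagAngle, pow_succ, Nat.cast_succ]; ring
  rw [this, abs_neg, abs_mul, abs_pow, abs_neg, abs_one, one_pow, one_mul,
    abs_of_nonneg (by positivity)]

theorem zigzagAngle_two_mul {s : ℕ} (hs : s ≠ 0) : zigzagAngle s (2 * s) = π / 2 := by
  simp only [zigzagAngle, pow_mul, neg_one_sq, one_pow, one_mul, Nat.cast_mul, Nat.cast_ofNat]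
  field_simp
  ring

section MycielskiMap

variable {F : Type*} [NormedAddCommGroup F] [InnerProductSpace ℝ F] {V : Type} {φ : V → F} {e : F}

noncomputable def mycielskiMap (φ : V → F) (e : F) (s : ℕ) : Option (V × Fin (2 * s + 1)) → F
  | none => -e
  | some (u, i) => cos (zigzagAngle s i) • φ u + sin (zigzagAngle s i) • e

theorem norm_mycielskiMap (hφ : ∀ v, ‖φ v‖ = 1) (he : ‖e‖ = 1) (horth : ∀ v, ⟪φ v, e⟫ = 0)
    (s : ℕ) : ∀ a, ‖mycielskiMap φ e s a‖ = 1
  | none => by simp [mycielskiMap, he]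
  | some (u, _) => norm_cos_smul_add_sin_smul (hφ u) he (horth u) _

theorem mycielskiMap_mem {K : Submodule ℝ F} (hφ : ∀ v, φ v ∈ K) (he : e ∈ K) (s : ℕ) :
    ∀ a, mycielskiMap φ e s a ∈ K
  | none => K.neg_mem he
  | some (u, _) => K.add_mem (K.smul_mem _ (hφ u)) (K.smul_mem _ he)

theorem norm_mycielskiMap_add_lt {G : SimpleGraph V} (hφ : ∀ v, ‖φ v‖ = 1) (he : ‖e‖ = 1)
    {ε : ℝ} (hε : 0 < ε) (hG : ∀ u v, G.Adj u v → ‖φ u + φ v‖ < ε) {s : ℕ} (hs : s ≠ 0)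
    {a b : Option (V × Fin (2 * s + 1))} (hab : (genMycielski G (2 * s + 1)).Adj a b) :
    ‖mycielskiMap φ e s a + mycielskiMap φ e s b‖ < ε + π / (2 * s) := by
  refine forall_adj_genMycielski (P := fun a b =>
    ‖mycielskiMap φ e s a + mycielskiMap φ e s b‖ < ε + π / (2 * s)) ?_ ?_ ?_ a b hab
  · intro a b h
    rwa [add_comm]
  · intro u v i j huv hij
    have hangle : |zigzagAngle s i + zigzagAngle s j| ≤ π / (4 * s) := by
      rcases hij with ⟨hi, hj⟩ | hj
      · simp only [hi, hj, zigzagAngle_zero, add_zero, abs_zero]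
        positivity
      · rw [hj, abs_zigzagAngle_add_succ]
    calc _ ≤ ‖φ u + φ v‖ + 2 * |zigzagAngle s i + zigzagAngle s j| :=
          norm_cos_smul_add_sin_smul_add_le (hφ v).le he.le _ _ _
      _ < ε + 2 * (π / (4 * s)) := by linarith [hG u v huv]
      _ = ε + π / (2 * s) := by ring
  · intro u i hi
    have hi' : (i : ℕ) = 2 * s := by omega
    have hpole : mycielskiMap φ e s (some (u, i)) = e := by
      simp only [mycielskiMap, hi', zigzagAngle_two_mul hs, cos_pi_div_two, sin_pi_div_two,
        zero_smul, one_smul, zero_add]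
    show ‖mycielskiMap φ e s (some (u, i)) + -e‖ < _
    rw [hpole, add_neg_cancel, norm_zero]
    positivity

end MycielskiMap

theorem exists_mycFamily_nearlyAntipodal {F : Type*} [NormedAddCommGroup F]
    [InnerProductSpace ℝ F] (t : ℕ) (b : Fin (t + 1) → F) (hb : Orthonormal ℝ b) {ε : ℝ}
    (hε : 0 < ε) :
    ∃ (V : Type) (G : SimpleGraph V), MycFamily (t + 2) V G ∧ ∃ φ : V → F,
      (∀ v, ‖φ v‖ = 1 ∧ φ v ∈ span ℝ (range b)) ∧ ∀ u v, G.Adj u v → ‖φ u + φ v‖ < ε := by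
  induction t generalizing ε with
  | zero =>
    refine ⟨Fin 2, ⊤, .base, ![b 0, -b 0], fun v => ?_, fun u v huv => ?_⟩
    · have hb0 : b 0 ∈ span ℝ (range b) := subset_span (mem_range_self 0)
      fin_cases v
      · exact ⟨hb.1 0, hb0⟩
      · exact ⟨by simpa using hb.1 0, neg_mem hb0⟩
    · fin_cases u <;> fin_cases v <;> simp_all
  | succ t ih =>
    obtain ⟨V, G, hG, φ, hφ, hadj⟩ :=
      ih (b ∘ Fin.castSucc) (hb.comp _ (Fin.castSucc_injective _)) (half_pos hε)
    set e := b (Fin.last _)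
    have hspan : span ℝ (range (b ∘ Fin.castSucc)) ≤ (ℝ ∙ e)ᗮ :=
      span_le.mpr <| range_subset_iff.mpr fun i =>
        mem_orthogonal_singleton_iff_inner_left.mpr (hb.2 (Fin.castSucc_ne_last i))
    obtain ⟨s, hs⟩ := exists_nat_gt (π / ε)
    have hs0 : s ≠ 0 := by
      rintro rfl
      exact (div_pos pi_pos hε).not_ge (by exact_mod_cast hs.le)
    refine ⟨_, _, .step (2 * s + 1) (by omega) hG, mycielskiMap φ e s, fun a => ⟨?_, ?_⟩,
      fun a a' haa' => ?_⟩
    · exact norm_mycielskiMap (fun v => (hφ v).1) (hb.1 _)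
        (fun v => mem_orthogonal_singleton_iff_inner_left.mp (hspan (hφ v).2)) s a
    · exact mycielskiMap_mem (fun v => span_mono (range_comp_subset_range _ _) (hφ v).2)
        (subset_span (mem_range_self _)) s a
    · have hπ : π / (2 * s) < ε / 2 := by
        rw [div_lt_iff₀ hε] at hs
        rw [div_lt_iff₀ (by positivity)]
        linarith
      calc _ < ε / 2 + π / (2 * s) :=
            norm_mycielskiMap_add_lt (fun v => (hφ v).1) (hb.1 _) (half_pos hε) hadj hs0 haa'
        _ < ε := by linarith

/-- Stiebitz's theorem implies the Borsuk–Ulam theorem: if every graph in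
`𝓜_k` has chromatic number at least `k`, then there is no continuous
antipodal map `f : Sⁿ → S^{n−1}`. -/
theorem stiebitz_implies_borsuk_ulam
    (stiebitz : ∀ (k : ℕ) (V : Type) (G : SimpleGraph V),
      2 ≤ k → MycFamily k V G → (k : ℕ∞) ≤ G.chromaticNumber)
    (n : ℕ) :
    ¬ ∃ f : Metric.sphere (0 : EuclideanSpace ℝ (Fin (n + 1))) 1 →
        Metric.sphere (0 : EuclideanSpace ℝ (Fin n)) 1,
      Continuous f ∧ ∀ x, f (-x) = -f x := by
  rintro ⟨f, hf, hodd⟩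
  obtain ⟨c, hc, C, hC⟩ := exists_coloring_sphere n
  obtain ⟨δ, hδ, hfδ⟩ :=
    exists_norm_add_lt_of_odd (CompactSpace.uniformContinuous_of_continuous hf) hodd hc
  obtain ⟨V, G, hG, φ, hφ, hadj⟩ :=
    exists_mycFamily_nearlyAntipodal (F := EuclideanSpace ℝ (Fin (n + 1))) n _
      EuclideanSpace.orthonormal_single hδ
  let Φ : V → sphere (0 : EuclideanSpace ℝ (Fin (n + 1))) 1 :=
    fun v => ⟨φ v, mem_sphere_zero_iff_norm.mpr (hφ v).1⟩
  have hcol : G.Colorable (n + 1) :=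
    ⟨.mk (C ∘ f ∘ Φ) fun huv hC' => (hC _ _ hC').not_gt (hfδ _ _ (hadj _ _ huv))⟩
  have := (stiebitz (n + 2) V G (by omega) hG).trans hcol.chromaticNumber_le
  norm_cast at this
  omega
end

section
/- Every graph in 𝓜_k has odd girth at least 2·min{r₁,…,r_{k-2}} + 1, where r₁,…,r_{k−2} are the parameters used in the iterations; in particular, for every k and every g there exists a graph with chromatic number at least k and odd girth at least g. -/
/-- `MycFamilyP rs V G` : `G` is obtained from `K₂` by iterating the
generalised Mycielski construction with the parameters listed in `rs`. -/
inductive MycFamilyP : List ℕ → (V : Type) → SimpleGraph V → Prop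
  | base : MycFamilyP [] (Fin 2) ⊤
  | step {rs : List ℕ} {V : Type} {G : SimpleGraph V} (r : ℕ) (hr : 1 ≤ r)
      (h : MycFamilyP rs V G) :
      MycFamilyP (r :: rs) (Option (V × Fin r)) (genMycielski G r)

/-! Odd closed walks are bounded throughout, which suffices since cycles are closed walks.
Give the vertex `(u, i)` of `M_r(G)` the layer `i` and the apex the layer `r`: adjacent vertices
lie in consecutive layers, except inside layer `0`. Hence an odd closed walk through the apex has
to go down to layer `0` and back, so it has length at least `2r + 1`, while an odd closed walk
avoiding the apex projects to an odd closed walk of `G` of the same length.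

For the second part, shift graphs replace Stiebitz's theorem. In the shift graph on increasing
`(k+1)`-tuples, the two walk-neighbours of a vertex of maximal head have the same tail, so the tail
map shortens an odd closed walk by two; induction gives odd girth at least `2k + 3`. Colouring a
`(k+1)`-tuple by the set of colours of its one-step extensions turns an `n`-colouring of the
`(k+2)`-tuples into a `2ⁿ`-colouring of the `(k+1)`-tuples, so no shift graph is finitely
colourable. -/

namespace SimpleGraph

variable {V : Type*} {G : SimpleGraph V}

def OddClosedWalksAtLeast (G : SimpleGraph V) (n : ℕ) : Prop :=
  ∀ (x : V) (W : G.Walk x x), Odd W.length → n ≤ W.length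

/-- `f` is a homomorphism from `G` to the path `0 - 1 - 2 - ⋯` with a loop added at `0`. -/
def IsLayering (G : SimpleGraph V) (f : V → ℕ) : Prop :=
  ∀ ⦃x y⦄, G.Adj x y → f x = 0 ∧ f y = 0 ∨ f y = f x + 1 ∨ f x = f y + 1

namespace Walk

variable {f : V → ℕ}

theorem layer_le_and_even_or_lt_length (hf : G.IsLayering f) {x y : V} (W : G.Walk x y) :
    f y ≤ f x + W.length ∧ (Even (W.length + f x + f y) ∨ f x + f y < W.length) := by
  induction W with
  | nil => simp
  | @cons x x' y hadj W ih =>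
    have := hf hadj
    grind [length_cons]

theorem two_mul_layer_lt_length (hf : G.IsLayering f) {x : V} (W : G.Walk x x)
    (hW : Odd W.length) : 2 * f x < W.length := by
  rcases (W.layer_le_and_even_or_lt_length hf).2 with h | h
  · grind
  · omega

end Walk

theorem oddClosedWalksAtLeast_top_fin_two (n : ℕ) :
    (⊤ : SimpleGraph (Fin 2)).OddClosedWalksAtLeast n := by
  intro x W hW
  have := W.three_le_chromaticNumber_of_odd_loop hW
  rw [chromaticNumber_top, Fintype.card_fin] at this
  exact absurd this (by decide)

end SimpleGraph

theorem SimpleGraph.OddClosedWalksAtLeast.le_oddGirth {V : Type} {G : SimpleGraph V} {n : ℕ}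
    (h : G.OddClosedWalksAtLeast n) : (n : ℕ∞) ≤ oddGirth G := by
  refine le_sInf ?_
  rintro _ ⟨x, W, -, hW, rfl⟩
  exact_mod_cast h x W hW

open SimpleGraph

section Mycielski

variable {V : Type} {G : SimpleGraph V} {r : ℕ}

def mycielskiLayer (r : ℕ) : Option (V × Fin r) → ℕ
  | none => r
  | some (_, i) => i

theorem isLayering_mycielskiLayer : (genMycielski G r).IsLayering (mycielskiLayer r) := by
  rintro (_ | ⟨u, i⟩) (_ | ⟨v, j⟩) h <;> simp only [genMycielski, fromRel_adj] at h
  · exact absurd rfl h.1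
  · have := j.isLt
    simp only [mycielskiLayer, false_or] at h ⊢
    omega
  · have := i.isLt
    simp only [mycielskiLayer, or_false] at h ⊢
    omega
  · simp only [mycielskiLayer]
    omega

theorem genMycielski_adj_some_some {u v : V} {i j : Fin r}
    (h : (genMycielski G r).Adj (some (u, i)) (some (v, j))) : G.Adj u v := by
  rcases (fromRel_adj _ _ _).1 h with ⟨-, h | h⟩
  exacts [h.1, h.1.symm]

def mycielskiProj : (genMycielski G r).induce {x | x.isSome} →g G where
  toFun x := (x.1.get x.2).1
  map_rel' := by
    rintro ⟨_ | ⟨u, i⟩, hx⟩ ⟨_ | ⟨v, j⟩, hy⟩ h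
    · simp at hx
    · simp at hx
    · simp at hy
    · exact genMycielski_adj_some_some h

theorem exists_walk_of_apex_not_mem_support {u v : V} {i j : Fin r}
    (W : (genMycielski G r).Walk (some (u, i)) (some (v, j))) (hW : none ∉ W.support) :
    ∃ P : G.Walk u v, P.length = W.length := by
  have hsome : ∀ x ∈ W.support, x ∈ {x : Option (V × Fin r) | x.isSome} := by
    rintro (_ | _) hx
    exacts [absurd hx hW, rfl]
  have hlen := congrArg Walk.length (W.map_induce hsome)
  rw [Walk.length_map] at hlen
  exact ⟨(W.induce _ hsome).map mycielskiProj, (Walk.length_map _ _).trans hlen⟩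

theorem SimpleGraph.OddClosedWalksAtLeast.genMycielski {m : ℕ}
    (h : G.OddClosedWalksAtLeast (2 * m + 1)) (hm : m ≤ r) :
    (genMycielski G r).OddClosedWalksAtLeast (2 * m + 1) := by
  classical
  intro x W hW
  by_cases hz : none ∈ W.support
  · have := (W.rotate none hz).two_mul_layer_lt_length isLayering_mycielskiLayer (by simpa)
    simp only [Walk.length_rotate, mycielskiLayer] at this
    omega
  · obtain _ | ⟨u, i⟩ := x
    · exact absurd W.start_mem_support hz
    obtain ⟨P, hP⟩ := exists_walk_of_apex_not_mem_support W hz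
    exact hP ▸ h u P (hP ▸ hW)

end Mycielski

theorem MycFamilyP.oddClosedWalksAtLeast {rs : List ℕ} {V : Type} {G : SimpleGraph V}
    (hG : MycFamilyP rs V G) {m : ℕ} (hm : ∀ r ∈ rs, m ≤ r) :
    G.OddClosedWalksAtLeast (2 * m + 1) := by
  induction hG with
  | base => exact oddClosedWalksAtLeast_top_fin_two _
  | step r _ _ ih =>
    exact OddClosedWalksAtLeast.genMycielski (ih fun r' hr' => hm r' (List.mem_cons_of_mem _ hr'))
      (hm r List.mem_cons_self)

abbrev IncTuple (k : ℕ) : Type := {a : Fin k → ℕ // StrictMono a}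

namespace IncTuple

variable {k : ℕ}

def init (a : IncTuple (k + 1)) : IncTuple k :=
  ⟨Fin.init a.1, a.2.comp Fin.strictMono_castSucc⟩

def tail (a : IncTuple (k + 1)) : IncTuple k :=
  ⟨Fin.tail a.1, a.2.comp Fin.strictMono_succ⟩

theorem tail_init (a : IncTuple (k + 2)) : a.init.tail = a.tail.init :=
  Subtype.ext (Fin.tail_init_eq_init_tail a.1)

def IsShift (a b : IncTuple k) : Prop :=
  ∃ c : IncTuple (k + 1), c.init = a ∧ c.tail = b

theorem isShift_iff {a b : IncTuple (k + 1)} :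
    a.IsShift b ↔ a.tail = b.init ∧ a.1 0 < b.1 0 := by
  constructor
  · rintro ⟨c, rfl, rfl⟩
    exact ⟨c.tail_init.symm, c.2 Fin.zero_lt_one⟩
  · rintro ⟨h, h0⟩
    have hc : StrictMono (Fin.cons (a.1 0) b.1 : Fin (k + 2) → ℕ) :=
      Fin.strictMono_cons.2 ⟨fun j => h0.trans_le (b.2.monotone (Fin.zero_le j)), b.2⟩
    refine ⟨⟨_, hc⟩, Subtype.ext ?_, rfl⟩
    funext i
    cases i using Fin.cases with
    | zero => rfl
    | succ j => exact (congrArg (·.1 j) h).symm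

theorem IsShift.tail_eq_init {a b : IncTuple (k + 1)} (h : a.IsShift b) : a.tail = b.init :=
  (isShift_iff.1 h).1

theorem IsShift.head_lt {a b : IncTuple (k + 1)} (h : a.IsShift b) : a.1 0 < b.1 0 :=
  (isShift_iff.1 h).2

theorem IsShift.tail {a b : IncTuple (k + 1)} (h : a.IsShift b) : a.tail.IsShift b.tail := by
  obtain ⟨c, rfl, rfl⟩ := h
  exact ⟨c.tail, c.tail_init, rfl⟩

end IncTuple

open IncTuple

def shiftGraph (k : ℕ) : SimpleGraph (IncTuple k) :=
  SimpleGraph.fromRel IsShift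

namespace shiftGraph

variable {k : ℕ}

theorem adj_iff {a b : IncTuple (k + 1)} :
    (shiftGraph (k + 1)).Adj a b ↔ a.IsShift b ∨ b.IsShift a := by
  refine (fromRel_adj _ _ _).trans ⟨And.right, fun h => ⟨?_, h⟩⟩
  rintro rfl
  rcases h with h | h <;> exact lt_irrefl _ h.head_lt

theorem isShift_of_adj_of_head_le {a b : IncTuple (k + 1)} (h : (shiftGraph (k + 1)).Adj a b)
    (hba : b.1 0 ≤ a.1 0) : b.IsShift a :=
  (adj_iff.1 h).resolve_left fun hab => hab.head_lt.not_ge hba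

def tailHom : shiftGraph (k + 2) →g shiftGraph (k + 1) where
  toFun := IncTuple.tail
  map_rel' h := adj_iff.2 ((adj_iff.1 h).imp IsShift.tail IsShift.tail)

theorem exists_walk_of_forall_head_le {v : IncTuple (k + 2)} (W : (shiftGraph (k + 2)).Walk v v)
    (hW : ¬W.Nil) (hv : ∀ u ∈ W.support, u.1 0 ≤ v.1 0) :
    ∃ (y : IncTuple (k + 1)) (W' : (shiftGraph (k + 1)).Walk y y), W'.length + 2 = W.length := by
  cases W with
  | nil => exact absurd Walk.Nil.nil hW
  | @cons _ b _ e P =>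
    have hP : ¬P.Nil := fun h => e.ne h.eq.symm
    have hb : b.IsShift v :=
      isShift_of_adj_of_head_le e (hv b (by simp))
    have hp : P.penultimate.IsShift v :=
      isShift_of_adj_of_head_le (P.adj_penultimate hP).symm
        (hv _ (List.mem_cons_of_mem _ (P.getVert_mem_support _)))
    have htail : tailHom P.penultimate = tailHom b := hp.tail_eq_init.trans hb.tail_eq_init.symm
    refine ⟨tailHom b, (P.dropLast.map tailHom).copy rfl htail, ?_⟩
    rw [Walk.length_copy, Walk.length_map, Walk.length_cons, ← P.length_dropLast_add_one hP]

theorem oddClosedWalksAtLeast (k : ℕ) :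
    (shiftGraph (k + 1)).OddClosedWalksAtLeast (2 * k + 3) := by
  induction k with
  | zero =>
    intro x W hW
    have : W.length ≠ 1 := fun h => (Walk.adj_of_length_eq_one h).ne rfl
    obtain ⟨t, ht⟩ := hW
    omega
  | succ k ih =>
    classical
    intro x W hW
    obtain ⟨v, hv, hmax⟩ :=
      W.support.toFinset.exists_max_image (fun u => u.1 0) ⟨x, by simp⟩
    rw [List.mem_toFinset] at hv
    have hnil : ¬(W.rotate v hv).Nil := by
      rw [Walk.nil_rotate, ← Walk.length_eq_zero_iff]
      exact fun h => by simp [h] at hW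
    obtain ⟨y, W', hW'⟩ := exists_walk_of_forall_head_le _ hnil
      fun u hu => hmax u (by simpa using hu)
    rw [Walk.length_rotate] at hW'
    have := ih y W' (by rw [← hW'] at hW; simpa [Nat.odd_add] using hW)
    omega

def coloringOfSucc {α : Type*} (C : (shiftGraph (k + 2)).Coloring α) :
    (shiftGraph (k + 1)).Coloring (Set α) :=
  Coloring.mk (fun a => {col | ∃ c : IncTuple (k + 2), c.init = a ∧ C c = col}) <| by
    suffices key : ∀ a b : IncTuple (k + 1), a.IsShift b →
        {col | ∃ c : IncTuple (k + 2), c.init = a ∧ C c = col} ≠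
          {col | ∃ c : IncTuple (k + 2), c.init = b ∧ C c = col} by
      intro a b h
      rcases adj_iff.1 h with h | h
      exacts [key a b h, (key b a h).symm]
    rintro _ _ ⟨c, rfl, rfl⟩ heq
    obtain ⟨w, hw, hcol⟩ :
        C c ∈ {col | ∃ w : IncTuple (k + 2), w.init = c.tail ∧ C w = col} :=
      heq ▸ ⟨c, rfl, rfl⟩
    refine C.valid (adj_iff.2 (Or.inl (isShift_iff.2 ⟨hw.symm, ?_⟩))) hcol.symm
    calc c.1 0 < c.1 1 := c.2 Fin.zero_lt_one
      _ = w.1 0 := congrArg (·.1 0) hw.symm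

theorem not_colorable_one (n : ℕ) : ¬(shiftGraph 1).Colorable n := by
  rintro ⟨C⟩
  let single (i : ℕ) : IncTuple 1 := ⟨fun _ => i, Subsingleton.strictMono _⟩
  obtain ⟨i, j, hij, hc⟩ := Finite.exists_ne_map_eq_of_infinite (C ∘ single)
  refine C.valid (adj_iff.2 ?_) hc
  rcases hij.lt_or_gt with h | h
  exacts [Or.inl (isShift_iff.2 ⟨Subsingleton.elim _ _, h⟩),
    Or.inr (isShift_iff.2 ⟨Subsingleton.elim _ _, h⟩)]

theorem not_colorable (k n : ℕ) : ¬(shiftGraph (k + 1)).Colorable n := by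
  classical
  induction k generalizing n with
  | zero => exact not_colorable_one n
  | succ k ih =>
    rintro ⟨C⟩
    exact ih _ (coloringOfSucc C).colorable

theorem chromaticNumber_eq_top (k : ℕ) : (shiftGraph (k + 1)).chromaticNumber = ⊤ := by
  by_contra h
  obtain ⟨n, hn⟩ := chromaticNumber_ne_top_iff_exists.1 h
  exact not_colorable k n hn

end shiftGraph

/-- Every graph in `𝓜_k` built with parameters `r₁, …, r_{k−2}` has odd girth
at least `2·min{r₁,…,r_{k−2}} + 1`; in particular, for every `k` and `g` there
is a graph with chromatic number at least `k` and odd girth at least `g`. -/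
theorem oddGirth_mycFamily :
    (∀ (rs : List ℕ) (V : Type) (G : SimpleGraph V), MycFamilyP rs V G →
      ∀ m : ℕ, (∀ r ∈ rs, m ≤ r) →
        ((2 * m + 1 : ℕ) : ℕ∞) ≤ oddGirth G) ∧
    ∀ k g : ℕ, ∃ (V : Type) (G : SimpleGraph V),
      (k : ℕ∞) ≤ G.chromaticNumber ∧ (g : ℕ∞) ≤ oddGirth G := by
  refine ⟨fun rs V G hG m hm => (hG.oddClosedWalksAtLeast hm).le_oddGirth, fun k g => ?_⟩
  refine ⟨IncTuple (g + 1), shiftGraph (g + 1), ?_, ?_⟩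
  · rw [shiftGraph.chromaticNumber_eq_top]
    exact le_top
  · calc (g : ℕ∞) ≤ (2 * g + 3 : ℕ) := by exact_mod_cast (by omega)
      _ ≤ oddGirth (shiftGraph (g + 1)) := (shiftGraph.oddClosedWalksAtLeast g).le_oddGirth
end

section
/- The Borsuk graph BG(n, α) has chromatic number at least n + 2 for every 0 < α < 2, assuming the Borsuk–Ulam theorem. -/
/-!
A proper colouring of `BG(n, α)` with `n + 1` colours covers `Sⁿ` by the `n + 1` closures of
its colour classes. Since `α < 2`, points close to `x` and to `-x` are adjacent, so none of these
closed sets contains an antipodal pair. This contradicts the Lusternik–Schnirelmann form of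
Borsuk–Ulam: for closed sets `A 0, …, A n` covering `Sⁿ`, the map
`x ↦ (d(x, A i) - d(-x, A i))_{1 ≤ i ≤ n}` is continuous and odd, so it has a zero `x`; then `x` and
`-x` lie in the same `A i`, with `i = 0` if neither lies in any other one.
-/

/-- The Borsuk graph `BG(n, α)`: vertices are the points of the unit sphere
`Sⁿ ⊂ ℝ^{n+1}`, with an edge between `x ≠ y` whenever `‖x − y‖ ≥ α`. -/
def BorsukGraph (n : ℕ) (α : ℝ) :
    SimpleGraph (Metric.sphere (0 : EuclideanSpace ℝ (Fin (n + 1))) 1) where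
  Adj x y := x ≠ y ∧ α ≤ ‖(x : EuclideanSpace ℝ (Fin (n + 1))) - y‖
  symm := by
    constructor
    intro x y h
    exact ⟨h.1.symm, by rw [norm_sub_rev]; exact h.2⟩
  loopless := by constructor; intro x h; exact h.1 rfl

open Metric Set

section Antipodal

variable {X : Type*} {E : Type*} [NormedAddCommGroup E] [NormedSpace ℝ E]

theorem exists_eq_zero_of_continuous_odd [TopologicalSpace X] [Neg X]
    (h : ¬ ∃ f : X → sphere (0 : E) 1, Continuous f ∧ ∀ x, f (-x) = -f x)
    {g : X → E} (hg : Continuous g) (hodd : ∀ x, g (-x) = -g x) : ∃ x, g x = 0 := by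
  by_contra! hne
  refine h ⟨fun x ↦ ⟨‖g x‖⁻¹ • g x,
    mem_sphere_zero_iff_norm.2 (norm_smul_inv_norm (𝕜 := ℝ) (hne x))⟩, ?_, fun x ↦ ?_⟩
  · exact ((hg.norm.inv₀ fun x ↦ norm_ne_zero_iff.2 (hne x)).smul hg).subtype_mk _
  · ext1
    simp [hodd]

theorem mem_of_infDist_eq [PseudoMetricSpace X] {A : Set X} (hA : IsClosed A) {x y : X}
    (hx : x ∈ A) (hxy : infDist x A = infDist y A) : y ∈ A := by
  rw [hA.mem_iff_infDist_zero ⟨x, hx⟩, ← hxy, infDist_zero_of_mem hx]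

theorem exists_neg_mem_of_isClosed_cover [PseudoMetricSpace X] [InvolutiveNeg X] [ContinuousNeg X]
    {n : ℕ}
    (h : ¬ ∃ f : X → sphere (0 : EuclideanSpace ℝ (Fin n)) 1, Continuous f ∧ ∀ x, f (-x) = -f x)
    {A : Fin (n + 1) → Set X} (hA : ∀ i, IsClosed (A i)) (hcover : ⋃ i, A i = univ) :
    ∃ i x, x ∈ A i ∧ -x ∈ A i := by
  set g : X → EuclideanSpace ℝ (Fin n) := fun x ↦
    WithLp.toLp 2 fun i ↦ infDist x (A i.succ) - infDist (-x) (A i.succ)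
  have hg : Continuous g := (PiLp.continuous_toLp 2 _).comp <| continuous_pi fun i ↦
    (continuous_infDist_pt _).sub ((continuous_infDist_pt _).comp continuous_neg)
  obtain ⟨x, hx⟩ := exists_eq_zero_of_continuous_odd h hg fun x ↦ by ext i; simp [g]
  have hsymm (i : Fin n) : infDist x (A i.succ) = infDist (-x) (A i.succ) :=
    sub_eq_zero.1 (congrArg (· i) hx)
  have hiff (i : Fin n) : x ∈ A i.succ ↔ -x ∈ A i.succ :=
    ⟨fun h ↦ mem_of_infDist_eq (hA _) h (hsymm i),
      fun h ↦ mem_of_infDist_eq (hA _) h (hsymm i).symm⟩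
  obtain ⟨j, hxj⟩ := iUnion_eq_univ_iff.1 hcover x
  obtain ⟨k, hxk⟩ := iUnion_eq_univ_iff.1 hcover (-x)
  cases j using Fin.cases with
  | succ i => exact ⟨_, x, hxj, (hiff i).1 hxj⟩
  | zero =>
    cases k using Fin.cases with
    | zero => exact ⟨0, x, hxj, hxk⟩
    | succ i => exact ⟨_, x, (hiff i).2 hxk, hxk⟩

theorem dist_neg_self_of_mem_sphere {r : ℝ} (x : sphere (0 : E) r) : dist (-x) x = 2 * r := by
  rw [Subtype.dist_eq, coe_neg_sphere, dist_eq_norm, ← neg_add', norm_neg, ← two_smul ℝ,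
    norm_smul, norm_eq_of_mem_sphere]
  norm_num

end Antipodal

theorem BorsukGraph.neg_notMem_closure_colorClass {n : ℕ} {α : ℝ} (hα : α < 2) {β : Type*}
    (C : (BorsukGraph n α).Coloring β) {c : β} {x : sphere (0 : EuclideanSpace ℝ (Fin (n + 1))) 1}
    (hx : x ∈ closure (C.colorClass c)) : -x ∉ closure (C.colorClass c) := by
  intro hnx
  set ε := min 1 ((2 - α) / 2)
  have hε : 0 < ε := lt_min one_pos (by linarith)
  obtain ⟨y, hy, hxy⟩ := mem_closure_iff.1 hx ε hε
  obtain ⟨z, hz, hxz⟩ := mem_closure_iff.1 hnx ε hε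
  have hyz : 2 - 2 * ε < dist y z := by
    have := dist_triangle4 (-x) z y x
    rw [dist_neg_self_of_mem_sphere, mul_one, dist_comm z y, dist_comm y x] at this
    linarith
  refine C.valid ⟨?_, ?_⟩ (hy.trans hz.symm)
  · rintro rfl
    rw [dist_self] at hyz
    linarith [min_le_left 1 ((2 - α) / 2)]
  · rw [← dist_eq_norm, ← Subtype.dist_eq]
    linarith [min_le_right 1 ((2 - α) / 2)]

theorem borsukGraph_chromatic_ge_general (n : ℕ)
    (borsuk_ulam : ¬ ∃ f : Metric.sphere (0 : EuclideanSpace ℝ (Fin (n + 1))) 1 →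
        Metric.sphere (0 : EuclideanSpace ℝ (Fin n)) 1,
      Continuous f ∧ ∀ x, f (-x) = -f x)
    (α : ℝ) (hα₂ : α < 2) :
    ((n + 2 : ℕ) : ℕ∞) ≤ (BorsukGraph n α).chromaticNumber := by
  have not_colorable : ¬ (BorsukGraph n α).Colorable (n + 1) := by
    rintro ⟨C⟩
    obtain ⟨c, x, hx, hnx⟩ := exists_neg_mem_of_isClosed_cover borsuk_ulam
      (fun c ↦ isClosed_closure (s := C.colorClass c))
      (iUnion_eq_univ_iff.2 fun x ↦ ⟨C x, subset_closure (C.mem_colorClass x)⟩)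
    exact BorsukGraph.neg_notMem_closure_colorClass hα₂ C hx hnx
  refine SimpleGraph.le_chromaticNumber_iff_colorable.2 fun m hm ↦ ?_
  by_contra! hlt
  exact not_colorable (hm.mono (by have := Nat.cast_lt.1 hlt; omega))

/-- Assuming the Borsuk–Ulam theorem (no continuous antipodal map
`Sⁿ → S^{n−1}`), the Borsuk graph `BG(n, α)` has chromatic number at least
`n + 2` for every `0 < α < 2`. -/
theorem borsukGraph_chromatic_ge (n : ℕ)
    (borsuk_ulam : ¬ ∃ f : Metric.sphere (0 : EuclideanSpace ℝ (Fin (n + 1))) 1 →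
        Metric.sphere (0 : EuclideanSpace ℝ (Fin n)) 1,
      Continuous f ∧ ∀ x, f (-x) = -f x)
    (α : ℝ) (hα₀ : 0 < α) (hα₂ : α < 2) :
    ((n + 2 : ℕ) : ℕ∞) ≤ (BorsukGraph n α).chromaticNumber :=
  borsukGraph_chromatic_ge_general n borsuk_ulam α hα₂
end
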